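/- The strengthening relation ⊑ is antisymmetric: if T̃₁ ⊑ T̃₂ and T̃₂ ⊑ T̃₁ then T̃₁ = T̃₂. -/

import Mathlib

inductive Place where
  | loc : Place
  | remote : Place
deriving DecidableEq

structure LVal where
  path : List Unit
  root : ℕ
deriving DecidableEq

mutual
inductive BaseTy where
  | unit : BaseTy
  | int : BaseTy
  | borrow : Bool → Set LVal → BaseTy
  | box : Ty → BaseTy
inductive Ty where
  | mk : BaseTy → Place → Ty
end

inductive PTy where
  | ty : Ty → PTy
  | pbox : PTy → Place → PTy
  | undef : Ty → PTy

inductive Str : PTy → PTy → Prop where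
  | reflex (t : PTy) : Str t t
  | box {t1 t2 : PTy} (Q : Place) : Str t1 t2 → Str (.pbox t1 Q) (.pbox t2 Q)
  | borrow {u w : Set LVal} (m : Bool) (Q : Place) : u ⊆ w →
      Str (.ty (.mk (.borrow m u) Q)) (.ty (.mk (.borrow m w) Q))
  | undefA {T1 T2 : Ty} : Str (.ty T1) (.ty T2) → Str (.undef T1) (.undef T2)
  | undefB {T1 T2 : Ty} : Str (.ty T1) (.ty T2) → Str (.ty T1) (.undef T2)
  | undefC {t1 : PTy} {T2 : Ty} (Q : Place) : Str t1 (.undef T2) →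
      Str (.pbox t1 Q) (.undef (.mk (.box T2) Q))

theorem Str.antisymm {t1 t2 : PTy} (h12 : Str t1 t2) (h21 : Str t2 t1) : t1 = t2 := by
  induction h12 with
  | reflex => rfl
  | box _ _ ih =>
    cases h21 with
    | reflex => rfl
    | box _ h => rw [ih h]
  | borrow _ _ hu =>
    cases h21 with
    | reflex => rfl
    | borrow _ _ hw => rw [hu.antisymm hw]
  | undefA _ ih =>
    cases h21 with
    | reflex => rfl
    | undefA h => cases ih h; rfl
  -- no rule strengthens an undefined type back into a defined one
  | undefB | undefC => cases h21

theorem str_antisymmetric : ∀ t1 t2 : PTy, Str t1 t2 → Str t2 t1 → t1 = t2 :=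
  fun _ _ => Str.antisymm
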